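/- Let G be an infinite group generated by finite X with Σ = X ∪ X⁻¹, under a symmetric partition of Σ (every call letter has infinite order in G and inverses of calls are responses and vice versa). Then no nonempty finite subset S ⊆ G has visibly pushdown full preimage π⁻¹(S): finite subsets of an infinite group are never VPL^∀. -/

import Mathlib

inductive VKind | call | internal | response
deriving DecidableEq

/-- A (nondeterministic) visibly pushdown automaton over alphabet `A`
partitioned by `kind` into call, internal and response letters. -/
structure VPA (A : Type) (kind : A → VKind) where
  Q : Type
  Γ : Type
  [finQ : Fintype Q]
  [finΓ : Fintype Γ]
  init : Q
  accept : Set Q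
  /-- transitions on call letters: push one symbol, do not inspect the stack -/
  δc : Q → A → Set (Q × Γ)
  /-- transitions on internal letters: do not inspect or modify the stack -/
  δi : Q → A → Set Q
  /-- transitions on response letters: pop the topmost stack symbol -/
  δr : Q → A → Γ → Set Q
  /-- transitions on response letters read on the empty stack (bottom symbol) -/
  δb : Q → A → Set Q

namespace VPA

variable {A : Type} {kind : A → VKind}

inductive Steps (M : VPA A kind) : M.Q × List M.Γ → List A → M.Q × List M.Γ → Prop
  | nil (c) : Steps M c [] c
  | call {q s a q' γ w c} : kind a = .call → (q', γ) ∈ M.δc q a →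
      Steps M (q', γ :: s) w c → Steps M (q, s) (a :: w) c
  | internal {q s a q' w c} : kind a = .internal → q' ∈ M.δi q a →
      Steps M (q', s) w c → Steps M (q, s) (a :: w) c
  | pop {q γ s a q' w c} : kind a = .response → q' ∈ M.δr q a γ →
      Steps M (q', s) w c → Steps M (q, γ :: s) (a :: w) c
  | popEmpty {q a q' w c} : kind a = .response → q' ∈ M.δb q a →
      Steps M (q', []) w c → Steps M (q, []) (a :: w) c

/-- A VPA accepts a word if reading it from the initial state with empty stack
can end in an accepting state (with arbitrary stack contents). -/
def Accepts (M : VPA A kind) (w : List A) : Prop :=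
  ∃ c : M.Q × List M.Γ, M.Steps (M.init, []) w c ∧ c.1 ∈ M.accept

end VPA

/-- `L` is a visibly pushdown language over the partition `kind`. -/
def IsVPL {A : Type} (kind : A → VKind) (L : Set (List A)) : Prop :=
  ∃ M : VPA A kind, L = {w | M.Accepts w}

/-! A call-free word read from the empty stack ends on the empty stack, so as a prefix it
influences acceptance only through the set of states it reaches there, and there are
finitely many such sets. Call-free words represent infinitely many group elements (powers
of the inverse of a call letter, which is a response of infinite order; or every element,
if there are no calls), so infinitely many elements `g` share one translate `g⁻¹ S`.
A nonempty finite `S` is `g⁻¹ S` for only finitely many `g`. -/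

namespace VPA

variable {A : Type} {kind : A → VKind} {M : VPA A kind}

theorem Steps.append {c₁ c₂ c₃ : M.Q × List M.Γ} {w u : List A}
    (h₁ : M.Steps c₁ w c₂) (h₂ : M.Steps c₂ u c₃) : M.Steps c₁ (w ++ u) c₃ := by
  induction h₁ with
  | nil => exact h₂
  | call ha hm _ ih => exact .call ha hm (ih h₂)
  | internal ha hm _ ih => exact .internal ha hm (ih h₂)
  | pop ha hm _ ih => exact .pop ha hm (ih h₂)
  | popEmpty ha hm _ ih => exact .popEmpty ha hm (ih h₂)

theorem Steps.exists_split : ∀ {w u : List A} {c₁ c₃ : M.Q × List M.Γ},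
    M.Steps c₁ (w ++ u) c₃ → ∃ c₂, M.Steps c₁ w c₂ ∧ M.Steps c₂ u c₃
  | [], _, _, _, h => ⟨_, .nil _, h⟩
  | _ :: _, _, _, _, h => by
    cases h with
    | call ha hm hs =>
      obtain ⟨c₂, h₁, h₂⟩ := exists_split hs
      exact ⟨c₂, .call ha hm h₁, h₂⟩
    | internal ha hm hs =>
      obtain ⟨c₂, h₁, h₂⟩ := exists_split hs
      exact ⟨c₂, .internal ha hm h₁, h₂⟩
    | pop ha hm hs =>
      obtain ⟨c₂, h₁, h₂⟩ := exists_split hs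
      exact ⟨c₂, .pop ha hm h₁, h₂⟩
    | popEmpty ha hm hs =>
      obtain ⟨c₂, h₁, h₂⟩ := exists_split hs
      exact ⟨c₂, .popEmpty ha hm h₁, h₂⟩

theorem Steps.stack_suffix_of_forall_ne_call {c c' : M.Q × List M.Γ} {w : List A}
    (h : M.Steps c w c') (hw : ∀ a ∈ w, kind a ≠ .call) : c'.2 <:+ c.2 := by
  induction h with
  | nil => exact List.suffix_refl _
  | call ha => exact absurd ha (hw _ List.mem_cons_self)
  | internal _ _ _ ih => exact ih fun b hb => hw b (List.mem_cons_of_mem _ hb)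
  | pop _ _ _ ih =>
    exact (ih fun b hb => hw b (List.mem_cons_of_mem _ hb)).trans (List.suffix_cons _ _)
  | popEmpty _ _ _ ih => exact ih fun b hb => hw b (List.mem_cons_of_mem _ hb)

def emptyStackReach (M : VPA A kind) (w : List A) : Set M.Q :=
  {q | M.Steps (M.init, []) w (q, [])}

theorem accepts_append_iff {w u : List A} (hw : ∀ a ∈ w, kind a ≠ .call) :
    M.Accepts (w ++ u) ↔
      ∃ q ∈ M.emptyStackReach w, ∃ c, M.Steps (q, []) u c ∧ c.1 ∈ M.accept := by
  constructor
  · rintro ⟨c, hc, hacc⟩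
    obtain ⟨⟨q, s⟩, h₁, h₂⟩ := Steps.exists_split hc
    obtain rfl : s = [] := List.suffix_nil.mp (h₁.stack_suffix_of_forall_ne_call hw)
    exact ⟨q, h₁, c, h₂, hacc⟩
  · rintro ⟨q, hq, c, hc, hacc⟩
    exact ⟨c, Steps.append hq hc, hacc⟩

theorem exists_infinite_accepts_append_congr (M : VPA A kind) (f : ℕ → List A)
    (hf : ∀ n, ∀ a ∈ f n, kind a ≠ .call) :
    ∃ I : Set ℕ, I.Infinite ∧
      ∀ n ∈ I, ∀ m ∈ I, ∀ u, M.Accepts (f n ++ u) ↔ M.Accepts (f m ++ u) := by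
  have := M.finQ
  obtain ⟨R, hR⟩ := Finite.exists_infinite_fiber fun n => M.emptyStackReach (f n)
  refine ⟨_, Set.infinite_coe_iff.mp hR, fun n hn m hm u => ?_⟩
  rw [accepts_append_iff (hf n), accepts_append_iff (hf m), Set.mem_preimage.mp hn,
    Set.mem_preimage.mp hm]

end VPA

section Group

variable {G : Type} [Group G]

theorem Set.Finite.setOf_forall_mul_mem_iff {S : Set G} (hS : S.Finite) (hne : S.Nonempty)
    (g₀ : G) : {g : G | ∀ t, g * t ∈ S ↔ g₀ * t ∈ S}.Finite := by
  obtain ⟨s, hs⟩ := hne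
  refine (hS.image (· * (g₀⁻¹ * s)⁻¹)).subset fun g hg => ⟨g * (g₀⁻¹ * s), ?_, by group⟩
  simpa using (hg (g₀⁻¹ * s)).mpr (by simpa using hs)

variable {A : Type} {σ : A → G}

theorem surjective_list_prod_map_of_closure_eq_top {inv : A → A}
    (hinv : ∀ s, σ (inv s) = (σ s)⁻¹) (hgen : Subgroup.closure (Set.range σ) = ⊤) :
    Function.Surjective fun w : List A => (w.map σ).prod := by
  have hsymm : Set.range σ ∪ (Set.range σ)⁻¹ = Set.range σ :=
    Set.union_eq_left.mpr fun g ⟨s, hs⟩ => ⟨inv s, by rw [hinv, hs, inv_inv]⟩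
  intro g
  have hg : g ∈ Submonoid.closure (Set.range σ) := by
    rw [← hsymm, ← Subgroup.closure_toSubmonoid, hgen]
    trivial
  obtain ⟨l, hl, rfl⟩ := Submonoid.exists_list_of_mem_closure hg
  obtain ⟨w, rfl⟩ : l ∈ Set.range (List.map σ) := by rwa [Set.range_list_map]
  exact ⟨w, rfl⟩

theorem exists_callFree_words_injective_prod [Infinite G] {inv : A → A} (kind : A → VKind)
    (hinv : ∀ s, σ (inv s) = (σ s)⁻¹)
    (hsurj : Function.Surjective fun w : List A => (w.map σ).prod)
    (hcallInf : ∀ s, kind s = .call → ¬ IsOfFinOrder (σ s))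
    (hcallResp : ∀ s, kind s = .call → kind (inv s) = .response) :
    ∃ f : ℕ → List A, (∀ n, ∀ a ∈ f n, kind a ≠ .call) ∧
      Function.Injective fun n => ((f n).map σ).prod := by
  by_cases hcall : ∃ x, kind x = .call
  · obtain ⟨x, hx⟩ := hcall
    refine ⟨fun n => List.replicate n (inv x), fun n a ha => ?_, fun n m hnm => ?_⟩
    · rw [List.eq_of_mem_replicate ha, hcallResp x hx]
      decide
    · simp only [List.map_replicate, List.prod_replicate, hinv] at hnm
      exact injective_pow_iff_not_isOfFinOrder.mpr
        (isOfFinOrder_inv_iff.not.mpr (hcallInf x hx)) hnm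
  · push Not at hcall
    let e := Infinite.natEmbedding G
    refine ⟨fun n => Function.surjInv hsurj (e n), fun n a _ => hcall a, fun n m hnm => ?_⟩
    apply e.injective
    simpa only [Function.surjInv_eq hsurj] using hnm

end Group

theorem finite_subset_not_VPLforall_symmetric_general {G : Type} [Group G] [Infinite G]
    {A : Type} (σ : A → G) (inv : A → A)
    (hinv : ∀ s : A, σ (inv s) = (σ s)⁻¹)
    (hgen : Subgroup.closure (Set.range σ) = ⊤)
    (kind : A → VKind)
    (hcallInf : ∀ s : A, kind s = VKind.call → ¬ IsOfFinOrder (σ s))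
    (hcallResp : ∀ s : A, kind s = VKind.call → kind (inv s) = VKind.response)
    (S : Set G) (hfin : S.Finite) (hne : S.Nonempty) :
    ¬ IsVPL kind ((fun w : List A => (w.map σ).prod) ⁻¹' S) := by
  rintro ⟨M, hM⟩
  have hsurj := surjective_list_prod_map_of_closure_eq_top hinv hgen
  obtain ⟨f, hcallFree, hinj⟩ :=
    exists_callFree_words_injective_prod kind hinv hsurj hcallInf hcallResp
  obtain ⟨I, hI, hcongr⟩ := M.exists_infinite_accepts_append_congr f hcallFree
  obtain ⟨n₀, hn₀⟩ := hI.nonempty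
  refine hI (((hfin.setOf_forall_mul_mem_iff hne (f n₀ |>.map σ).prod).preimage
    hinj.injOn).subset fun n hn t => ?_)
  obtain ⟨u, rfl⟩ := hsurj t
  have hL : ∀ w, (w.map σ).prod ∈ S ↔ M.Accepts w := fun w => Set.ext_iff.mp hM w
  simpa only [← hL, List.map_append, List.prod_append] using hcongr n hn n₀ hn₀ u

/-- In an infinite finitely generated group, for a symmetric partition of the
generating alphabet (calls have infinite order, inverses of calls are
responses and vice versa), no nonempty finite subset has visibly pushdown full
preimage. -/
theorem finite_subset_not_VPLforall_symmetric {G : Type} [Group G] [Infinite G]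
    {A : Type} [Fintype A] (σ : A → G) (inv : A → A)
    (hinv : ∀ s : A, σ (inv s) = (σ s)⁻¹)
    (hgen : Subgroup.closure (Set.range σ) = ⊤)
    (kind : A → VKind)
    (hcallInf : ∀ s : A, kind s = VKind.call → ¬ IsOfFinOrder (σ s))
    (hcallResp : ∀ s : A, kind s = VKind.call → kind (inv s) = VKind.response)
    (hrespCall : ∀ s : A, kind s = VKind.response → kind (inv s) = VKind.call)
    (S : Set G) (hfin : S.Finite) (hne : S.Nonempty) :
    ¬ IsVPL kind ((fun w : List A => (w.map σ).prod) ⁻¹' S) :=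
  finite_subset_not_VPLforall_symmetric_general σ inv hinv hgen kind hcallInf hcallResp S hfin hne
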